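/- arXiv:2412.12608 — 8 statements merged into one kernel-verified Lean document; each statement's English description precedes it below -/
import Mathlib

section
/- Let 0 < ν < 1 and 0 < ω < (2 - 2√ν)/(1-ν). Then the spectral radius of the 2×2 nonnegative matrix W = [[|1-ω|, ων], [ω|1-ω|, ω²ν + |1-ω|]] is strictly less than 1. -/
theorem spectral_radius_W_lt_one (ν ω : ℝ) (hν : 0 < ν) (hν1 : ν < 1) (hω : 0 < ω)
    (hω2 : ω < (2 - 2 * Real.sqrt ν) / (1 - ν)) :
    ∀ μ ∈ spectrum ℂ
      ((!![|1 - ω|, ω * ν; ω * |1 - ω|, ω ^ 2 * ν + |1 - ω|] : Matrix (Fin 2) (Fin 2) ℝ).map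
        (Complex.ofReal)), ‖μ‖ < 1 := by
  intro μ hμ
  rw [spectrum.mem_iff, Matrix.isUnit_iff_isUnit_det, isUnit_iff_ne_zero, not_not] at hμ
  simp [Matrix.det_fin_two, Matrix.algebraMap_matrix_apply] at hμ
  -- real setup
  set a : ℝ := |1 - ω| with ha_def
  have ha : 0 ≤ a := abs_nonneg _
  have hsν : 0 < Real.sqrt ν := Real.sqrt_pos.mpr hν
  have hsν1 : Real.sqrt ν < 1 := by
    rw [show (1:ℝ) = Real.sqrt 1 by simp]
    exact Real.sqrt_lt_sqrt hν.le hν1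
  have hsq : Real.sqrt ν ^ 2 = ν := Real.sq_sqrt hν.le
  have hω3 : ω * (1 + Real.sqrt ν) < 2 := by
    have h1ν : 0 < 1 - ν := by linarith
    rw [lt_div_iff₀ h1ν] at hω2
    nlinarith [hsν1, hsν]
  have key : ω * Real.sqrt ν < 1 - a := by
    rcases le_or_gt ω 1 with h | h
    · have h' : a = 1 - ω := by rw [ha_def, abs_of_nonneg (by linarith)]
      rw [h']
      nlinarith [mul_lt_mul_of_pos_left hsν1 hω]
    · have h' : a = ω - 1 := by rw [ha_def, abs_of_nonpos (by linarith)]; ring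
      rw [h']
      linarith
  have hx : 0 < ω * Real.sqrt ν := mul_pos hω hsν
  have ha1 : a < 1 := by linarith
  have hq : ω ^ 2 * ν < (1 - a) ^ 2 := by
    have h1 : 0 < 1 - a - ω * Real.sqrt ν := by linarith
    have h2 : 0 < 1 - a + ω * Real.sqrt ν := by linarith
    nlinarith [mul_pos h1 h2, hsq]
  set c : ℝ := a + ω ^ 2 * ν / 2 with hc_def
  have hc0 : 0 ≤ c := by positivity
  have haa : a ^ 2 ≤ a := by nlinarith [mul_nonneg ha (by linarith : (0:ℝ) ≤ 1 - a)]
  have h1a : ω ^ 2 * ν < 1 - a := by nlinarith [hq, haa]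
  have hc1 : c < 1 := by rw [hc_def]; linarith
  set D : ℝ := ω ^ 2 * ν * (ω ^ 2 * ν / 4 + a) with hD_def
  have hD : 0 ≤ D := by positivity
  set s : ℝ := Real.sqrt D with hs_def
  have hs0 : 0 ≤ s := Real.sqrt_nonneg _
  have hs2 : s ^ 2 = c ^ 2 - a ^ 2 := by
    rw [hs_def, Real.sq_sqrt hD, hc_def]; ring
  have hsc : s ≤ c := by
    have h1 : s ^ 2 ≤ c ^ 2 := by nlinarith [sq_nonneg a]
    have h2 := Real.sqrt_le_sqrt h1
    rwa [Real.sqrt_sq hs0, Real.sqrt_sq hc0] at h2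
  have hmain : c + s < 1 := by
    have hlt : s ^ 2 < (1 - c) ^ 2 := by rw [hs2, hc_def]; nlinarith [hq]
    have h2 := Real.sqrt_lt_sqrt (sq_nonneg s) hlt
    rw [Real.sqrt_sq hs0, Real.sqrt_sq (by linarith : (0:ℝ) ≤ 1 - c)] at h2
    linarith
  -- complex factoring
  have hs2c : (s : ℂ) ^ 2 = (c : ℂ) ^ 2 - (a : ℂ) ^ 2 := by exact_mod_cast congrArg Complex.ofReal hs2
  have hcc : (c : ℂ) = (a : ℂ) + (ω : ℂ) ^ 2 * (ν : ℂ) / 2 := by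
    rw [hc_def]; push_cast; ring
  have hfact : (μ - ((c : ℂ) + (s : ℂ))) * (μ - ((c : ℂ) - (s : ℂ))) = 0 := by
    linear_combination hμ - hs2c - 2 * μ * hcc
  rcases mul_eq_zero.mp hfact with h | h
  · have hμ' : μ = ((c + s : ℝ) : ℂ) := by push_cast; linear_combination h
    rw [hμ', Complex.norm_real, Real.norm_eq_abs, abs_of_nonneg (by linarith)]
    exact hmain
  · have hμ' : μ = ((c - s : ℝ) : ℂ) := by push_cast; linear_combination h
    rw [hμ', Complex.norm_real, Real.norm_eq_abs, abs_of_nonneg (by linarith)]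
    linarith
end

section
/- Let 0 < ν < 1 and 0 < ω < (2 - 2√ν)/(1-ν). Then the spectral radius of W = [[|1-ω|, ων], [ω|1-ω|, ω²ν + |1-ω|]] equals (2|1-ω| + ω²ν + ω√(4|1-ω|ν + ω²ν²))/2. -/
theorem spectral_radius_W_eq (ν ω : ℝ) (hν : 0 < ν) (hν1 : ν < 1) (hω : 0 < ω)
    (hω2 : ω < (2 - 2 * Real.sqrt ν) / (1 - ν)) :
    IsGreatest ((fun μ : ℂ => ‖μ‖) '' spectrum ℂ
        ((!![|1 - ω|, ω * ν; ω * |1 - ω|, ω ^ 2 * ν + |1 - ω|] : Matrix (Fin 2) (Fin 2) ℝ).map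
          (Complex.ofReal)))
      ((2 * |1 - ω| + ω ^ 2 * ν + ω * Real.sqrt (4 * |1 - ω| * ν + ω ^ 2 * ν ^ 2)) / 2) := by
  have ha : (0:ℝ) ≤ |1 - ω| := abs_nonneg _
  set a := |1 - ω| with ha'
  set s := Real.sqrt (4 * a * ν + ω ^ 2 * ν ^ 2) with hs'
  have hs0 : 0 ≤ s := Real.sqrt_nonneg _
  have hs : s ^ 2 = 4 * a * ν + ω ^ 2 * ν ^ 2 := Real.sq_sqrt (by positivity)
  set r₁ := (2 * a + ω ^ 2 * ν + ω * s) / 2 with hr₁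
  set r₂ := (2 * a + ω ^ 2 * ν - ω * s) / 2 with hr₂
  have hsum : r₁ + r₂ = 2 * a + ω ^ 2 * ν := by rw [hr₁, hr₂]; ring
  have hprod : r₁ * r₂ = a ^ 2 := by
    have : r₁ * r₂ = ((2 * a + ω ^ 2 * ν) ^ 2 - ω ^ 2 * s ^ 2) / 4 := by rw [hr₁, hr₂]; ring
    rw [this, hs]; ring
  have hr₁0 : 0 ≤ r₁ := by positivity
  have hr₂0 : 0 ≤ r₂ := by
    have h1 : 0 < ω ^ 2 * ν := by positivity
    nlinarith [hs, hs0, ha, hω.le]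
  have hle : r₂ ≤ r₁ := by
    rw [hr₁, hr₂]
    nlinarith [mul_nonneg hω.le hs0]
  set M := (!![a, ω * ν; ω * a, ω ^ 2 * ν + a] : Matrix (Fin 2) (Fin 2) ℝ).map Complex.ofReal
    with hM
  have hsumC : (r₁ : ℂ) + r₂ = 2 * a + ω ^ 2 * ν := by exact_mod_cast congrArg Complex.ofReal hsum
  have hprodC : (r₁ : ℂ) * r₂ = (a : ℂ) ^ 2 := by exact_mod_cast congrArg Complex.ofReal hprod
  have hdet : ∀ μ : ℂ, μ ∈ spectrum ℂ M ↔ μ = r₁ ∨ μ = r₂ := by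
    intro μ
    rw [spectrum.mem_iff]
    have hmat : algebraMap ℂ (Matrix (Fin 2) (Fin 2) ℂ) μ - M =
        !![μ - a, -(ω * ν); -(ω * a), μ - (ω ^ 2 * ν + a)] := by
      ext i j
      fin_cases i <;> fin_cases j <;>
        simp [Matrix.algebraMap_matrix_apply, Matrix.map_apply, hM] <;> push_cast <;> ring
    rw [hmat]
    rw [Matrix.isUnit_iff_isUnit_det, isUnit_iff_ne_zero, not_ne_iff,
      Matrix.det_fin_two_of]
    have key : (μ - (a:ℂ)) * (μ - ((ω:ℂ) ^ 2 * ν + a)) - -((ω:ℂ) * ν) * -((ω:ℂ) * a) =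
        (μ - r₁) * (μ - r₂) := by
      linear_combination μ * hsumC - hprodC
    rw [key, mul_eq_zero, sub_eq_zero, sub_eq_zero]
  constructor
  · refine ⟨(r₁ : ℂ), (hdet _).2 (Or.inl rfl), ?_⟩
    simp [Complex.norm_real, abs_of_nonneg hr₁0]
  · rintro x ⟨μ, hμ, rfl⟩
    rcases (hdet μ).1 hμ with rfl | rfl <;>
      simp [Complex.norm_real, abs_of_nonneg hr₁0, abs_of_nonneg hr₂0, hle]
end

section
/- For fixed 0 < ν < 1, the function g_ν(ω) = 2|1-ω| + ω²ν + ω√(4|1-ω|ν + ω²ν²) attains its minimum over the interval (0, (2-2√ν)/(1-ν)) uniquely at ω = 1, with minimum value 2ν. -/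
lemma g_strict (ν ω : ℝ) (hν : 0 < ν) (hν1 : ν < 1) (hω : 0 < ω) (hne : ω ≠ 1) :
    2 * ν < 2 * |1 - ω| + ω ^ 2 * ν + ω * Real.sqrt (4 * |1 - ω| * ν + ω ^ 2 * ν ^ 2) := by
  set s := Real.sqrt (4 * |1 - ω| * ν + ω ^ 2 * ν ^ 2) with hs
  have hs0 : 0 ≤ s := Real.sqrt_nonneg _
  have harg : 0 ≤ 4 * |1 - ω| * ν + ω ^ 2 * ν ^ 2 := by positivity
  have hs2 : s ^ 2 = 4 * |1 - ω| * ν + ω ^ 2 * ν ^ 2 := Real.sq_sqrt harg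
  rcases lt_or_gt_of_ne hne with h1 | h1
  · -- ω < 1
    have habs : |1 - ω| = 1 - ω := abs_of_pos (by linarith)
    rw [habs] at hs2 ⊢
    have hspos : 0 < s := by
      have : 0 < s ^ 2 := by nlinarith
      positivity
    by_cases hR : 2 * ν - 2 + 2 * ω - ω ^ 2 * ν ≤ 0
    · nlinarith [mul_pos hω hspos]
    · push_neg at hR
      -- from R > 0 deduce (1+ν)ω > 1-ν
      have hw : (1 + ν) * ω > 1 - ν := by nlinarith [sq_nonneg (ω - 1), sq_nonneg (ν * ω - 1)]
      have hA : (ω * s) ^ 2 > (2 * ν - 2 + 2 * ω - ω ^ 2 * ν) ^ 2 := by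
        have key : (ω*s)^2 - (2*ν-2+2*ω-ω^2*ν)^2
            = 4 * (1-ν) * ((1-ω) * ((1+ν)*ω - (1-ν))) := by
          have : (ω*s)^2 = ω^2 * (4*(1-ω)*ν + ω^2*ν^2) := by rw [mul_pow, hs2]
          rw [this]; ring
        nlinarith [mul_pos (mul_pos (by linarith : (0:ℝ) < 1-ν) (by linarith : (0:ℝ) < 1-ω))
          (by linarith : (0:ℝ) < (1+ν)*ω - (1-ν))]
      nlinarith [mul_pos hω hspos]
  · -- ω > 1
    have habs : |1 - ω| = ω - 1 := by
      rw [abs_of_neg (by linarith)]; ring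
    rw [habs] at hs2 ⊢
    have hsge : ω * ν ≤ s := by nlinarith [mul_pos hω hν]
    nlinarith [mul_le_mul_of_nonneg_left hsge (le_of_lt hω),
      mul_pos hν (mul_pos (by linarith : (0:ℝ) < ω - 1) (by linarith : (0:ℝ) < ω + 1))]

theorem g_min_at_one (ν : ℝ) (hν : 0 < ν) (hν1 : ν < 1) :
    (∀ ω ∈ Set.Ioo (0 : ℝ) ((2 - 2 * Real.sqrt ν) / (1 - ν)),
        2 * ν ≤ 2 * |1 - ω| + ω ^ 2 * ν + ω * Real.sqrt (4 * |1 - ω| * ν + ω ^ 2 * ν ^ 2)) ∧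
    2 * |1 - (1 : ℝ)| + 1 ^ 2 * ν + 1 * Real.sqrt (4 * |1 - (1 : ℝ)| * ν + 1 ^ 2 * ν ^ 2)
      = 2 * ν ∧
    (∀ ω ∈ Set.Ioo (0 : ℝ) ((2 - 2 * Real.sqrt ν) / (1 - ν)),
        2 * |1 - ω| + ω ^ 2 * ν + ω * Real.sqrt (4 * |1 - ω| * ν + ω ^ 2 * ν ^ 2) = 2 * ν →
          ω = 1) := by
  have hval : 2 * |1 - (1 : ℝ)| + 1 ^ 2 * ν + 1 * Real.sqrt (4 * |1 - (1 : ℝ)| * ν + 1 ^ 2 * ν ^ 2)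
      = 2 * ν := by
    simp only [sub_self, abs_zero, mul_zero, zero_mul, zero_add, one_pow, one_mul]
    rw [Real.sqrt_sq (le_of_lt hν)]; ring
  refine ⟨?_, hval, ?_⟩
  · intro ω hω
    by_cases h : ω = 1
    · subst h; rw [hval]
    · exact le_of_lt (g_strict ν ω hν hν1 hω.1 h)
  · intro ω hω heq
    by_contra h
    exact absurd heq (ne_of_gt (g_strict ν ω hν hν1 hω.1 h))
end

section
/- For fixed 0 < ν < 1, the function g_ν(ω) = 2(1-ω) + ω²ν + ω√(4(1-ω)ν + ω²ν²) is monotonically decreasing on (0,1]. -/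
theorem g_decreasing (ν : ℝ) (hν : 0 < ν) (hν1 : ν < 1) :
    StrictAntiOn
      (fun ω : ℝ => 2 * (1 - ω) + ω ^ 2 * ν + ω * Real.sqrt (4 * (1 - ω) * ν + ω ^ 2 * ν ^ 2))
      (Set.Ioc (0 : ℝ) 1) := by
  intro a ha b hb hab
  obtain ⟨ha0, ha1⟩ := ha
  obtain ⟨hb0, hb1⟩ := hb
  have ha1' : a < 1 := lt_of_lt_of_le hab hb1
  have hEa0 : (0:ℝ) < 4 * (1 - a) * ν + a ^ 2 * ν ^ 2 := by nlinarith
  have hEb0 : (0:ℝ) ≤ 4 * (1 - b) * ν + b ^ 2 * ν ^ 2 := by nlinarith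
  have hsa0 : 0 < Real.sqrt (4 * (1 - a) * ν + a ^ 2 * ν ^ 2) := Real.sqrt_pos.mpr hEa0
  have hsb0 : 0 ≤ Real.sqrt (4 * (1 - b) * ν + b ^ 2 * ν ^ 2) := Real.sqrt_nonneg _
  set sa := Real.sqrt (4 * (1 - a) * ν + a ^ 2 * ν ^ 2) with hsa
  set sb := Real.sqrt (4 * (1 - b) * ν + b ^ 2 * ν ^ 2) with hsb
  have hsa2 : sa ^ 2 = 4 * (1 - a) * ν + a ^ 2 * ν ^ 2 := Real.sq_sqrt hEa0.le
  have hsb2 : sb ^ 2 = 4 * (1 - b) * ν + b ^ 2 * ν ^ 2 := Real.sq_sqrt hEb0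
  clear_value sa sb
  -- sa < 2 - ν a and sb < 2 - ν b, since (2 - νω)^2 - E = 4(1-ν) > 0
  have hsaLt : sa < 2 - ν * a := by
    by_contra h
    push_neg at h
    have h2 : (0:ℝ) ≤ sa + (2 - ν * a) := by nlinarith
    nlinarith [mul_nonneg (by linarith : (0:ℝ) ≤ sa - (2 - ν * a)) h2, hsa2]
  have hsbLt : sb < 2 - ν * b := by
    by_contra h
    push_neg at h
    have h2 : (0:ℝ) ≤ sb + (2 - ν * b) := by nlinarith
    nlinarith [mul_nonneg (by linarith : (0:ℝ) ≤ sb - (2 - ν * b)) h2, hsb2]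
  -- key: sa - sb > ν (b - a)
  have hdiff : ν * (b - a) < sa - sb := by
    have hsum : 0 < sa + sb := by linarith
    have h1 : (sa - sb) * (sa + sb) = ν * (b - a) * (4 - ν * (a + b)) := by
      nlinarith [hsa2, hsb2]
    have h2 : ν * (b - a) * (sa + sb) < ν * (b - a) * (4 - ν * (a + b)) := by
      have hba : 0 < ν * (b - a) := by nlinarith
      apply mul_lt_mul_of_pos_left _ hba
      linarith
    rw [← h1] at h2
    exact lt_of_mul_lt_mul_right (by linarith [h2]) hsum.le
  have hhb : 0 < sb + ν * b := by positivity
  have hha : sb + ν * b < sa + ν * a := by linarith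
  beta_reduce
  rw [← hsa, ← hsb]
  have gidb : 2 * (1 - b) + b ^ 2 * ν + b * sb = (sb + ν * b) ^ 2 / (2 * ν) := by
    rw [eq_div_iff (by positivity)]
    linear_combination -hsb2
  have gida : 2 * (1 - a) + a ^ 2 * ν + a * sa = (sa + ν * a) ^ 2 / (2 * ν) := by
    rw [eq_div_iff (by positivity)]
    linear_combination -hsa2
  rw [gidb, gida]
  have h2 : (sb + ν * b) ^ 2 < (sa + ν * a) ^ 2 := by nlinarith
  exact div_lt_div_of_pos_right h2 (by positivity)
end

section
/- For fixed 0 < ν < 1, the function g_ν(ω) = 2(ω-1) + ω²ν + ω√(4(ω-1)ν + ω²ν²) is monotonically increasing on (1, (2-2√ν)/(1-ν)). -/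
theorem g_increasing (ν : ℝ) (hν : 0 < ν) (hν1 : ν < 1) :
    StrictMonoOn
      (fun ω : ℝ => 2 * (ω - 1) + ω ^ 2 * ν + ω * Real.sqrt (4 * (ω - 1) * ν + ω ^ 2 * ν ^ 2))
      (Set.Ioo (1 : ℝ) ((2 - 2 * Real.sqrt ν) / (1 - ν))) := by
  intro a ha b hb hab
  simp only
  have h1a : (1 : ℝ) < a := ha.1
  have h1b : (1 : ℝ) < b := hb.1
  have hsr : Real.sqrt (4 * (a - 1) * ν + a ^ 2 * ν ^ 2)
      ≤ Real.sqrt (4 * (b - 1) * ν + b ^ 2 * ν ^ 2) := by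
    apply Real.sqrt_le_sqrt
    nlinarith [mul_pos (sub_pos.2 hab) hν,
      mul_le_mul_of_nonneg_right (by nlinarith : a ^ 2 ≤ b ^ 2) (sq_nonneg ν)]
  have hs0 : 0 ≤ Real.sqrt (4 * (a - 1) * ν + a ^ 2 * ν ^ 2) := Real.sqrt_nonneg _
  have hmul : a * Real.sqrt (4 * (a - 1) * ν + a ^ 2 * ν ^ 2)
      ≤ b * Real.sqrt (4 * (b - 1) * ν + b ^ 2 * ν ^ 2) :=
    mul_le_mul hab.le hsr hs0 (by linarith)
  nlinarith [hmul, mul_lt_mul_of_pos_left (mul_lt_mul'' hab hab (by linarith) (by linarith)) hν]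
end

section
/- For fixed 0 < ν < 1, the third derivative of h(ω) = 2(1-ω) + ω²ν + ω√(ν(4-4ω+ω²ν)) on (0,1) equals -24(ω-2)(ν-1)√(ν(ω²ν - 4ω + 4)) / (ω²ν - 4ω + 4)³, which is strictly negative. -/
/-!
Write `q = ω²ν - 4ω + 4` and `s = √(ν q)`. Since `s' = q' s / (2 q)`, the derivative of
`p · s / q ^ k` is again of this shape: `(p' q + (1/2 - k) p q') · s / q ^ (k + 1)`.
Starting from `h = 2(1 - ω) + ω²ν + ω s`, three differentiations give
`h''' = -24 (ω - 2)(ν - 1) s / q³`, and on `(0, 1)` both `ω - 2` and `ν - 1` are negative while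
`q > 0`.
-/

open Real Set

theorem HasDerivAt.mul_sqrt {p q : ℝ → ℝ} {p' q' c x : ℝ} (hp : HasDerivAt p p' x)
    (hq : HasDerivAt q q' x) (hcq : 0 < c * q x) :
    HasDerivAt (fun y => p y * √(c * q y)) ((p' * q x + p x * q' / 2) * √(c * q x) / q x) x := by
  refine (hp.mul ((hq.const_mul c).sqrt hcq.ne')).congr_deriv ?_
  have hs : √(c * q x) ≠ 0 := (sqrt_pos.2 hcq).ne'
  have hq0 : q x ≠ 0 := right_ne_zero_of_mul hcq.ne'
  field_simp
  linear_combination (-(p x * q')) * sq_sqrt hcq.le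

theorem HasDerivAt.mul_sqrt_div_pow {p q : ℝ → ℝ} {p' q' c x : ℝ} (k : ℕ)
    (hp : HasDerivAt p p' x) (hq : HasDerivAt q q' x) (hcq : 0 < c * q x) :
    HasDerivAt (fun y => p y * √(c * q y) / q y ^ k)
      ((p' * q x + (1 / 2 - k) * p x * q') * √(c * q x) / q x ^ (k + 1)) x := by
  have hq0 : q x ≠ 0 := right_ne_zero_of_mul hcq.ne'
  refine ((hp.mul_sqrt hq hcq).div (hq.pow k) (pow_ne_zero k hq0)).congr_deriv ?_
  rcases k with _ | k
  · simp only [Nat.cast_zero, pow_zero, Pi.one_apply]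
    ring
  · simp only [Pi.pow_apply, Nat.add_sub_cancel, Nat.cast_add, Nat.cast_one]
    field_simp
    ring

theorem iteratedDeriv_succ_eqOn {𝕜 F : Type*} [NontriviallyNormedField 𝕜] [NormedAddCommGroup F]
    [NormedSpace 𝕜 F] {n : ℕ} {f g g' : 𝕜 → F} {U : Set 𝕜} (hU : IsOpen U)
    (hfg : EqOn (iteratedDeriv n f) g U) (hg : ∀ y ∈ U, HasDerivAt g (g' y) y) :
    EqOn (iteratedDeriv (n + 1) f) g' U := fun y hy => by
  rw [iteratedDeriv_succ, (hfg.eventuallyEq_of_mem (hU.mem_nhds hy)).deriv_eq]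
  exact (hg y hy).deriv

theorem hasDerivAt_quad (ν x : ℝ) : HasDerivAt (fun y => y ^ 2 * ν - 4 * y + 4) (2 * x * ν - 4) x :=
  ((((hasDerivAt_pow 2 x).mul_const ν).sub ((hasDerivAt_id x).const_mul 4)).add_const 4).congr_deriv
    (by ring)

section
variable {ν x : ℝ}

theorem hasDerivAt_h (hx : 0 < ν * (x ^ 2 * ν - 4 * x + 4)) :
    HasDerivAt (fun y => 2 * (1 - y) + y ^ 2 * ν + y * √(ν * (y ^ 2 * ν - 4 * y + 4)))
      (-2 + 2 * ν * x + 2 * (x ^ 2 * ν - 3 * x + 2) * √(ν * (x ^ 2 * ν - 4 * x + 4)) /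
        (x ^ 2 * ν - 4 * x + 4)) x :=
  (((((hasDerivAt_id x).const_sub 1).const_mul 2).add ((hasDerivAt_pow 2 x).mul_const ν)).add
    ((hasDerivAt_id' x).mul_sqrt (hasDerivAt_quad ν x) hx)).congr_deriv (by ring)

theorem hasDerivAt_deriv_h (hx : 0 < ν * (x ^ 2 * ν - 4 * x + 4)) :
    HasDerivAt (fun y => -2 + 2 * ν * y + 2 * (y ^ 2 * ν - 3 * y + 2) *
        √(ν * (y ^ 2 * ν - 4 * y + 4)) / (y ^ 2 * ν - 4 * y + 4))
      (2 * ν + 2 * (x ^ 3 * ν ^ 2 - 6 * x ^ 2 * ν + 6 * x * ν + 6 * x - 8) *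
        √(ν * (x ^ 2 * ν - 4 * x + 4)) / (x ^ 2 * ν - 4 * x + 4) ^ 2) x := by
  have hp : HasDerivAt (fun y => 2 * (y ^ 2 * ν - 3 * y + 2)) (2 * (2 * x * ν - 3)) x :=
    ((((hasDerivAt_pow 2 x).mul_const ν).sub ((hasDerivAt_id x).const_mul 3)).add_const 2).const_mul
      2 |>.congr_deriv (by ring)
  have H := (((hasDerivAt_id x).const_mul (2 * ν)).const_add (-2)).add
    (hp.mul_sqrt_div_pow 1 (hasDerivAt_quad ν x) hx)
  simp only [pow_one] at H
  exact H.congr_deriv (by ring)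

theorem hasDerivAt_deriv2_h (hx : 0 < ν * (x ^ 2 * ν - 4 * x + 4)) :
    HasDerivAt (fun y => 2 * ν + 2 * (y ^ 3 * ν ^ 2 - 6 * y ^ 2 * ν + 6 * y * ν + 6 * y - 8) *
        √(ν * (y ^ 2 * ν - 4 * y + 4)) / (y ^ 2 * ν - 4 * y + 4) ^ 2)
      (-24 * (x - 2) * (ν - 1) * √(ν * (x ^ 2 * ν - 4 * x + 4)) / (x ^ 2 * ν - 4 * x + 4) ^ 3) x := by
  have hp : HasDerivAt (fun y => 2 * (y ^ 3 * ν ^ 2 - 6 * y ^ 2 * ν + 6 * y * ν + 6 * y - 8))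
      (2 * (3 * x ^ 2 * ν ^ 2 - 12 * x * ν + 6 * ν + 6)) x :=
    ((((((hasDerivAt_pow 3 x).mul_const (ν ^ 2)).sub
      (((hasDerivAt_pow 2 x).const_mul 6).mul_const ν)).add
      (((hasDerivAt_id x).const_mul 6).mul_const ν)).add
      ((hasDerivAt_id x).const_mul 6)).sub_const 8).const_mul 2 |>.congr_deriv (by ring)
  exact ((hp.mul_sqrt_div_pow 2 (hasDerivAt_quad ν x) hx).const_add (2 * ν)).congr_deriv (by ring)

end

theorem third_deriv_neg (ν : ℝ) (hν : 0 < ν) (hν1 : ν < 1) :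
    ∀ ω ∈ Set.Ioo (0 : ℝ) 1,
      iteratedDeriv 3
          (fun ω : ℝ => 2 * (1 - ω) + ω ^ 2 * ν + ω * Real.sqrt (ν * (4 - 4 * ω + ω ^ 2 * ν))) ω
        = -24 * (ω - 2) * (ν - 1) * Real.sqrt (ν * (ω ^ 2 * ν - 4 * ω + 4)) /
            (ω ^ 2 * ν - 4 * ω + 4) ^ 3 ∧
      -24 * (ω - 2) * (ν - 1) * Real.sqrt (ν * (ω ^ 2 * ν - 4 * ω + 4)) /
          (ω ^ 2 * ν - 4 * ω + 4) ^ 3 < 0 := by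
  rintro ω ⟨hω0, hω1⟩
  set U : Set ℝ := {y | 0 < ν * (y ^ 2 * ν - 4 * y + 4)}
  have hU : IsOpen U := isOpen_lt continuous_const (by fun_prop)
  have hq : 0 < ω ^ 2 * ν - 4 * ω + 4 := by nlinarith [mul_pos (mul_pos hω0 hω0) hν]
  have hωU : ω ∈ U := mul_pos hν hq
  have h₀ : EqOn (iteratedDeriv 0
      (fun ω : ℝ => 2 * (1 - ω) + ω ^ 2 * ν + ω * √(ν * (4 - 4 * ω + ω ^ 2 * ν))))
      (fun y => 2 * (1 - y) + y ^ 2 * ν + y * √(ν * (y ^ 2 * ν - 4 * y + 4))) U := fun y _ => by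
    simp only [iteratedDeriv_zero]
    ring_nf
  have h₃ := iteratedDeriv_succ_eqOn hU (iteratedDeriv_succ_eqOn hU (iteratedDeriv_succ_eqOn hU h₀
    fun _ => hasDerivAt_h) fun _ => hasDerivAt_deriv_h) fun _ => hasDerivAt_deriv2_h
  refine ⟨h₃ hωU, div_neg_of_neg_of_pos ?_ (pow_pos hq 3)⟩
  have hs : 0 < √(ν * (ω ^ 2 * ν - 4 * ω + 4)) := sqrt_pos.2 hωU
  linarith [mul_pos (mul_pos (sub_pos.2 (hω1.trans one_lt_two)) (sub_pos.2 hν1)) hs]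
end

section
/- Let ν ∈ (0,1). For any ω with 0 < ω < 2 and 0 < ω ≤ 1 or 1 < ω < (2-2√ν)/(1-ν), one has (|1-ω| - (1-ω)² + ω²ν)/(1 - |1-ω|) < 1. -/
theorem unique_sol_ratio_lt_one (ν ω : ℝ) (hν : 0 < ν) (hν1 : ν < 1)
    (hω : 0 < ω) (hω2 : ω < 2)
    (h : ω ≤ 1 ∨ (1 < ω ∧ ω < (2 - 2 * Real.sqrt ν) / (1 - ν))) :
    (|1 - ω| - (1 - ω) ^ 2 + ω ^ 2 * ν) / (1 - |1 - ω|) < 1 := by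
  rcases h with h1 | ⟨h1, h2⟩
  · rw [abs_of_nonneg (by linarith)]
    rw [div_lt_one (by linarith)]
    nlinarith [mul_pos hω hω]
  · rw [abs_of_nonpos (by linarith)]
    set s := Real.sqrt ν with hs
    have hs2 : s ^ 2 = ν := Real.sq_sqrt hν.le
    have hs0 : 0 < s := Real.sqrt_pos.mpr hν
    have hs1 : s < 1 := by nlinarith
    have hkey : ω * (1 + s) < 2 := by
      rw [lt_div_iff₀ (by linarith)] at h2
      nlinarith [mul_pos hω hs0, hs2]
    rw [div_lt_one (by linarith)]
    nlinarith [mul_pos (sub_pos.mpr hkey) (show (0:ℝ) < 2 - (1 - s) * ω by nlinarith)]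
end

section
/- Let A be an invertible n×n real matrix with ‖A⁻¹‖₂ < 1. Suppose x and x̄ both satisfy Ax - |x| = b for some b ∈ ℝⁿ, where |x| denotes the entrywise absolute value. Then x = x̄. -/
/-!
Subtracting the two equations gives `A (x - x') = |x| - |x'|`, so `x - x' = A⁻¹ (|x| - |x'|)`.
Since `‖|x| - |x'|‖ ≤ ‖x - x'‖` and `‖A⁻¹‖ < 1`, the vector `|x| - |x'|` must vanish, and hence
so does `x - x'`.
-/

open Matrix

theorem ContinuousLinearMap.eq_zero_of_norm_le_norm_apply {𝕜 E F : Type*}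
    [NontriviallyNormedField 𝕜] [NormedAddCommGroup E] [SeminormedAddCommGroup F]
    [NormedSpace 𝕜 E] [NormedSpace 𝕜 F] (T : E →L[𝕜] F) (hT : ‖T‖ < 1) {z : E}
    (hz : ‖z‖ ≤ ‖T z‖) : z = 0 := by
  by_contra hne
  have hpos : 0 < ‖z‖ := norm_pos_iff.mpr hne
  have : ‖T z‖ < ‖z‖ :=
    calc ‖T z‖ ≤ ‖T‖ * ‖z‖ := T.le_opNorm z
      _ < 1 * ‖z‖ := mul_lt_mul_of_pos_right hT hpos
      _ = ‖z‖ := one_mul _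
  exact (hz.trans_lt this).false

theorem EuclideanSpace.norm_le_norm_of_forall_abs_le {ι : Type*} [Fintype ι]
    {x y : EuclideanSpace ℝ ι} (h : ∀ i, |x i| ≤ |y i|) : ‖x‖ ≤ ‖y‖ := by
  simp only [EuclideanSpace.norm_eq, Real.norm_eq_abs]
  exact Real.sqrt_le_sqrt (Finset.sum_le_sum fun i _ ↦ pow_le_pow_left₀ (abs_nonneg _) (h i) 2)

theorem ave_unique_solution {n : ℕ} (A : Matrix (Fin n) (Fin n) ℝ) (hA : IsUnit A)
    (hnorm : ‖Matrix.toEuclideanCLM (𝕜 := ℝ) A⁻¹‖ < 1)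
    (b : EuclideanSpace ℝ (Fin n)) (x x' : EuclideanSpace ℝ (Fin n))
    (hx : ∀ i, A.mulVec x i - |x i| = b i)
    (hx' : ∀ i, A.mulVec x' i - |x' i| = b i) : x = x' := by
  set z : EuclideanSpace ℝ (Fin n) := WithLp.toLp 2 fun i ↦ |x i| - |x' i|
  have hAz : WithLp.toLp 2 (A *ᵥ (x - x')) = z := by
    ext i
    have heq := (hx i).trans (hx' i).symm
    simp only [mulVec_sub, Pi.sub_apply, z]
    linarith
  have hz : toEuclideanCLM (𝕜 := ℝ) A⁻¹ z = x - x' := by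
    rw [← hAz, toEuclideanCLM_toLp, mulVec_mulVec,
      nonsing_inv_mul _ ((isUnit_iff_isUnit_det A).mp hA), one_mulVec]
    rfl
  have hzle : ‖z‖ ≤ ‖x - x'‖ :=
    EuclideanSpace.norm_le_norm_of_forall_abs_le fun i ↦ abs_abs_sub_abs_le_abs_sub (x i) (x' i)
  have hz0 : z = 0 :=
    (toEuclideanCLM (𝕜 := ℝ) A⁻¹).eq_zero_of_norm_le_norm_apply hnorm (hz ▸ hzle)
  rw [← sub_eq_zero, ← hz, hz0, map_zero]
end
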